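/- For n ≥ 1 let F_n ∈ ℂ[Z_1, …, Z_n] be the polynomials defined by the identity exp(Σ_{n≥1} Z_n X^n) = 1 + Σ_{n≥1} F_n(Z_1,…,Z_n) X^n of formal power series in X over the polynomial ring. Let N be a positive integer, let i = (i_1, …, i_{N−1}) ∈ ℕ₀^{N−1} be a multi-index with |i| = i_1 + ⋯ + i_{N−1} ≥ 1, and set S(i) = i_1 + 2 i_2 + ⋯ + (N−1) i_{N−1}. Then for every sequence (z_n)_{n≥1} of complex numbers and every n ≥ 1, the partial derivative ∂^{|i|} F_n / (∂Z_1^{i_1} ⋯ ∂Z_{N−1}^{i_{N−1}}) evaluated at (z_1,…,z_n) has absolute value at most the coefficient of X^n in X^{S(i)} · exp(Σ_{m≥1} |z_m| X^m); in particular it vanishes when n < S(i). -/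

import Mathlib

noncomputable section

/-- The exponential of a formal power series (intended for series with zero constant term):
the coefficient of `X^n` in `exp F = ∑_k F^k / k!` (only `k ≤ n` contribute when the constant
term of `F` vanishes). -/
def PowerSeries.expOf {K : Type*} [Field K] (F : PowerSeries K) : PowerSeries K :=
  PowerSeries.mk fun n =>
    ∑ k ∈ Finset.range (n + 1), (k.factorial : K)⁻¹ * PowerSeries.coeff (R := K) n (F ^ k)


/-- The polynomials `F_n ∈ ℂ[Z_1, Z_2, …]` defined by
`exp (∑_{m ≥ 1} Z_m X^m) = 1 + ∑_{n ≥ 1} F_n(Z_1, …, Z_n) X^n`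
(the variable `Z_m` is `MvPolynomial.X m`). -/
def Fpoly (n : ℕ) : MvPolynomial ℕ ℂ :=
  ∑ k ∈ Finset.range (n + 1),
    MvPolynomial.C ((k.factorial : ℂ)⁻¹) *
      PowerSeries.coeff (R := MvPolynomial ℕ ℂ) n
        ((PowerSeries.mk fun m => if m = 0 then 0 else MvPolynomial.X m) ^ k)

/-- The iterated partial derivative `∂^i = ∂^{i_1}_{Z_1} ⋯ ∂^{i_{M}}_{Z_{M}}` attached to a
multi-index `i ∈ ℕ₀^M`. -/
def pderivMulti (M : ℕ) (i : Fin M → ℕ) (P : MvPolynomial ℕ ℂ) : MvPolynomial ℕ ℂ :=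
  (List.finRange M).foldl
    (fun (Q : MvPolynomial ℕ ℂ) (j : Fin M) => (fun Q' => MvPolynomial.pderiv ((j : ℕ) + 1) Q')^[i j] Q) P

/-! Differentiating `exp (∑ Z_m X^m)` with respect to `Z_j` multiplies it by `X^j`, so
`∂F_n/∂Z_j = F_{n-j}` (with `F_0 = 1` and `F_m = 0` for `m < 0`), and iterating,
`∂^i F_n = F_{n - S(i)}`. It remains to bound `|F_m(z)|`, and this follows by expanding the
exponential: the coefficients of `(∑ z_m X^m)^k` are majorized by those of `(∑ |z_m| X^m)^k`.
Since only finitely many powers contribute to a given coefficient, we work with the truncations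
`e_M(G) = ∑_{k < M} G^k / k!`, on which a derivation `D` acts by `D e_{M+1}(G) = e_M(G) · D G`. -/

open PowerSeries Finset

section ExpTrunc

variable (K : Type*) {B : Type*} [Field K] [CommRing B] [Algebra K B]

def expTrunc (M : ℕ) (b : B) : B :=
  ∑ k ∈ range M, (k.factorial : K)⁻¹ • b ^ k

variable {K}

theorem Derivation.map_expTrunc_succ [CharZero K] (D : Derivation K B B) (M : ℕ) (b : B) :
    D (expTrunc K (M + 1) b) = expTrunc K M b * D b := by
  have hterm : ∀ k : ℕ, D (((k + 1).factorial : K)⁻¹ • b ^ (k + 1)) =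
      (k.factorial : K)⁻¹ • b ^ k * D b := by
    intro k
    rw [D.map_smul, D.leibniz_pow, Nat.add_sub_cancel, ← Nat.cast_smul_eq_nsmul K, smul_smul,
      smul_eq_mul, smul_mul_assoc, Nat.factorial_succ, Nat.cast_mul, mul_inv, mul_right_comm,
      inv_mul_cancel₀ (Nat.cast_ne_zero.2 k.succ_ne_zero), one_mul]
  rw [expTrunc, expTrunc, map_sum, sum_range_succ', sum_mul]
  simp [hterm]

end ExpTrunc

namespace PowerSeries

section MapDerivation

variable {R A : Type*} [CommSemiring R] [CommRing A] [Algebra R A]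

def mapDerivation (D : Derivation R A A) : Derivation R A⟦X⟧ A⟦X⟧ :=
  Derivation.mk'
    { toFun := fun φ => mk fun n => D (coeff n φ)
      map_add' := fun φ ψ => by ext n; simp
      map_smul' := fun r φ => by ext n; simp }
    fun φ ψ => by
      ext n
      simp only [LinearMap.coe_mk, AddHom.coe_mk, coeff_mk, smul_eq_mul, map_add, coeff_mul,
        map_sum, Derivation.leibniz, sum_add_distrib]
      congr 1
      exact Finset.Nat.sum_antidiagonal_swap (f := fun p => coeff p.1 ψ * D (coeff p.2 φ))

@[simp]
theorem coeff_mapDerivation (D : Derivation R A A) (φ : A⟦X⟧) (n : ℕ) :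
    coeff n (mapDerivation D φ) = D (coeff n φ) := by
  simp [mapDerivation]

end MapDerivation

theorem coeff_expTrunc_of_lt {K A : Type*} [Field K] [CommRing A] [Algebra K A] {G : A⟦X⟧}
    (hG : constantCoeff G = 0) {n M : ℕ} (hn : n < M) :
    coeff n (expTrunc K M G) = coeff n (expTrunc K (n + 1) G) := by
  simp only [expTrunc, map_sum, coeff_smul]
  refine (sum_subset (range_subset_range.2 hn) fun k _ hkn => ?_).symm
  rw [mem_range, not_lt] at hkn
  rw [coeff_of_lt_order n
    ((Nat.cast_lt.2 hkn).trans_le (le_order_pow_of_constantCoeff_eq_zero k hG)), smul_zero]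

theorem coeff_expOf {K : Type*} [Field K] (F : K⟦X⟧) (n : ℕ) :
    coeff n (expOf F) = coeff n (expTrunc K (n + 1) F) := by
  simp [expOf, expTrunc]

theorem norm_coeff_pow_le {R : Type*} [SeminormedRing R] [NormOneClass R] {A : R⟦X⟧}
    {B : ℝ⟦X⟧} (h : ∀ m, ‖coeff m A‖ ≤ coeff m B) (k n : ℕ) :
    ‖coeff n (A ^ k)‖ ≤ coeff n (B ^ k) := by
  induction k generalizing n with
  | zero => by_cases hn : n = 0 <;> simp [coeff_one, hn]
  | succ k ih =>
    rw [pow_succ, pow_succ, coeff_mul, coeff_mul]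
    refine (norm_sum_le _ _).trans (sum_le_sum fun p _ => ?_)
    exact (norm_mul_le _ _).trans
      (mul_le_mul (ih p.1) (h p.2) (norm_nonneg _) ((norm_nonneg _).trans (ih p.1)))

theorem norm_coeff_expTrunc_le {𝕜 : Type*} [RCLike 𝕜] {A : 𝕜⟦X⟧} {B : ℝ⟦X⟧}
    (h : ∀ m, ‖coeff m A‖ ≤ coeff m B) (M n : ℕ) :
    ‖coeff n (expTrunc 𝕜 M A)‖ ≤ coeff n (expTrunc ℝ M B) := by
  simp only [expTrunc, map_sum, coeff_smul, smul_eq_mul]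
  refine (norm_sum_le _ _).trans (sum_le_sum fun k _ => ?_)
  rw [norm_mul, norm_inv, RCLike.norm_natCast]
  exact mul_le_mul_of_nonneg_left (norm_coeff_pow_le h k n) (by positivity)

end PowerSeries

open MvPolynomial

def Zseries : (MvPolynomial ℕ ℂ)⟦X⟧ :=
  PowerSeries.mk fun m => if m = 0 then 0 else MvPolynomial.X m

theorem constantCoeff_Zseries : constantCoeff Zseries = 0 := by
  simp [Zseries, ← coeff_zero_eq_constantCoeff_apply]

theorem Fpoly_eq_coeff_expTrunc (n : ℕ) :
    Fpoly n = PowerSeries.coeff n (expTrunc ℂ (n + 1) Zseries) := by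
  simp only [Fpoly, expTrunc, map_sum, PowerSeries.coeff_smul, C_mul', Zseries]

theorem mapDerivation_pderiv_Zseries {j : ℕ} (hj : 1 ≤ j) :
    mapDerivation (pderiv j) Zseries = PowerSeries.X ^ j := by
  refine PowerSeries.ext fun m => ?_
  rw [coeff_mapDerivation, PowerSeries.coeff_X_pow, Zseries, coeff_mk]
  split_ifs <;> simp_all [pderiv_X]

theorem pderiv_Fpoly {j : ℕ} (hj : 1 ≤ j) (n : ℕ) :
    pderiv j (Fpoly n) = if j ≤ n then Fpoly (n - j) else 0 := by
  rw [Fpoly_eq_coeff_expTrunc, ← coeff_mapDerivation, Derivation.map_expTrunc_succ,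
    mapDerivation_pderiv_Zseries hj, mul_comm, coeff_X_pow_mul']
  split_ifs
  · rw [coeff_expTrunc_of_lt constantCoeff_Zseries (by omega), Fpoly_eq_coeff_expTrunc]
  · rfl

/-- `F_n` for all integers `n`, with `F_n = 0` for `n < 0`; then `∂F_n/∂Z_j = F_{n-j}`
holds without case distinction. -/
def FpolyInt (n : ℤ) : MvPolynomial ℕ ℂ :=
  if 0 ≤ n then Fpoly n.toNat else 0

theorem FpolyInt_natCast_sub (n S : ℕ) :
    FpolyInt ((n : ℤ) - S) = if S ≤ n then Fpoly (n - S) else 0 := by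
  unfold FpolyInt
  by_cases h : S ≤ n
  · rw [if_pos (by omega), if_pos h]
    congr
    omega
  · rw [if_neg (by omega), if_neg h]

theorem pderiv_FpolyInt {j : ℕ} (hj : 1 ≤ j) (n : ℤ) :
    pderiv j (FpolyInt n) = FpolyInt (n - j) := by
  unfold FpolyInt
  split_ifs with hn hnj hnj
  · rw [pderiv_Fpoly hj, if_pos (by omega)]
    congr 2
    omega
  · rw [pderiv_Fpoly hj, if_neg (by omega)]
  · omega
  · exact map_zero _

theorem iterate_pderiv_FpolyInt {j : ℕ} (hj : 1 ≤ j) (c : ℕ) (n : ℤ) :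
    (fun Q => pderiv j Q)^[c] (FpolyInt n) = FpolyInt (n - j * c) := by
  induction c with
  | zero => simp
  | succ c ih =>
    rw [Function.iterate_succ_apply', ih, pderiv_FpolyInt hj]
    congr 1
    push_cast
    ring

theorem pderivMulti_Fpoly (M : ℕ) (i : Fin M → ℕ) (n : ℕ) :
    pderivMulti M i (Fpoly n) = FpolyInt (n - ∑ j : Fin M, ((j : ℕ) + 1) * i j) := by
  have hfold : ∀ (l : List (Fin M)) (m : ℤ),
      l.foldl (fun Q (j : Fin M) => (fun Q' => pderiv ((j : ℕ) + 1) Q')^[i j] Q) (FpolyInt m) =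
        FpolyInt (m - (l.map fun (j : Fin M) => ((j : ℕ) + 1) * i j).sum) := by
    intro l
    induction l with
    | nil => simp
    | cons a l ih =>
      intro m
      rw [List.foldl_cons, iterate_pderiv_FpolyInt (by omega), ih, List.map_cons, List.sum_cons]
      congr 1
      push_cast
      ring
  have hstart : Fpoly n = FpolyInt n := by simp [FpolyInt]
  rw [pderivMulti, hstart, hfold, Fin.sum_univ_def]

theorem eval_Fpoly (z : ℕ → ℂ) (n : ℕ) :
    eval z (Fpoly n) =
      PowerSeries.coeff n
        (expTrunc ℂ (n + 1) (PowerSeries.mk fun m => if m = 0 then 0 else z m)) := by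
  have hmap :
      PowerSeries.map (eval z) Zseries = PowerSeries.mk fun m => if m = 0 then 0 else z m := by
    ext m
    simp [Zseries, apply_ite (eval z)]
  simp [Fpoly_eq_coeff_expTrunc, expTrunc, smul_eval, ← hmap, ← map_pow, PowerSeries.coeff_map]

theorem norm_eval_Fpoly_le (z : ℕ → ℂ) (n : ℕ) :
    ‖eval z (Fpoly n)‖ ≤
      PowerSeries.coeff n (expOf (PowerSeries.mk fun m => if m = 0 then 0 else ‖z m‖)) := by
  rw [eval_Fpoly, coeff_expOf]
  refine norm_coeff_expTrunc_le (fun m => ?_) _ _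
  by_cases hm : m = 0 <;> simp [hm]

theorem pderiv_Fpoly_bound_general (N : ℕ) (i : Fin (N - 1) → ℕ) (z : ℕ → ℂ) (n : ℕ) :
    ‖MvPolynomial.eval z (pderivMulti (N - 1) i (Fpoly n))‖ ≤
        PowerSeries.coeff (R := ℝ) n
          (PowerSeries.X ^ (∑ j : Fin (N - 1), ((j : ℕ) + 1) * i j) *
            PowerSeries.expOf (PowerSeries.mk fun m => if m = 0 then 0 else ‖z m‖)) ∧
      (n < ∑ j : Fin (N - 1), ((j : ℕ) + 1) * i j →
        MvPolynomial.eval z (pderivMulti (N - 1) i (Fpoly n)) = 0) := by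
  rw [pderivMulti_Fpoly, FpolyInt_natCast_sub, PowerSeries.coeff_X_pow_mul']
  split_ifs with hSn
  · exact ⟨norm_eval_Fpoly_le z _, fun hlt => absurd hSn (by omega)⟩
  · simp

/-- **Lemma 3.6 (ii).**  For a multi-index `i ∈ ℕ₀^{N-1}` with `|i| ≥ 1` and
`S(i) = i_1 + 2 i_2 + ⋯ + (N-1) i_{N-1}`, the value `∂^i F_n (z_1, …, z_n)` is bounded by
the `n`-th coefficient of `X^{S(i)} exp (∑_{m ≥ 1} |z_m| X^m)`; in particular it vanishes
when `n < S(i)`. -/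
theorem pderiv_Fpoly_bound (N : ℕ) (hN : 1 ≤ N) (i : Fin (N - 1) → ℕ)
    (hi : 1 ≤ ∑ j, i j) (z : ℕ → ℂ) (n : ℕ) (hn : 1 ≤ n) :
    ‖MvPolynomial.eval z (pderivMulti (N - 1) i (Fpoly n))‖ ≤
        PowerSeries.coeff (R := ℝ) n
          (PowerSeries.X ^ (∑ j : Fin (N - 1), ((j : ℕ) + 1) * i j) *
            PowerSeries.expOf (PowerSeries.mk fun m => if m = 0 then 0 else ‖z m‖)) ∧
      (n < ∑ j : Fin (N - 1), ((j : ℕ) + 1) * i j →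
        MvPolynomial.eval z (pderivMulti (N - 1) i (Fpoly n)) = 0) :=
  pderiv_Fpoly_bound_general N i z n
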